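/- arXiv:1602.02705 — 6 statements merged into one kernel-verified Lean document; each statement's English description precedes it below -/
import Mathlib

section
/- Let N be an odd prime and a ≥ 1 an integer. Then (∏_{k=1}^{N-1} k^{⌊ak/N⌋})^4 ≡ 1 (mod N). -/
/-!
Let `Q = ∏ k ^ k` over `1 ≤ k < p`. Since `k ^ p = k` in `ZMod p`,
`k ^ (a k) = k ^ ⌊a k / p⌋ * k ^ (a k mod p)`, so `P * R = Q ^ a` where `R = ∏ k ^ (a k mod p)`.
Pairing `k` with `p - k` and Wilson's theorem give `Q ^ 2 = ±1`. If `p ∤ a`, the substitution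
`j = a k mod p` permutes the nonzero residues and turns `R` into `a ^ (-∑ k) * Q`; as
`4 ∑ k = 2 p (p - 1)`, Fermat gives `R ^ 4 = 1` (and `R = 1` if `p ∣ a`). Hence `P ^ 4 = Q ^ (4 a) = 1`.
-/

open Finset

namespace ZMod

theorem prod_Ico_one_val_unit_mul {M : Type*} [CommMonoid M] {n : ℕ} [NeZero n]
    (u : (ZMod n)ˣ) (f : ℕ → M) :
    ∏ k ∈ Ico 1 n, f (u * k : ZMod n).val = ∏ k ∈ Ico 1 n, f k := by
  have maps_to (v : (ZMod n)ˣ) (k : ℕ) (hk : k ∈ Ico 1 n) : (v * k : ZMod n).val ∈ Ico 1 n := by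
    rw [mem_Ico] at hk ⊢
    refine ⟨Nat.one_le_iff_ne_zero.2 ?_, val_lt _⟩
    rw [Ne, val_eq_zero, Units.mul_right_eq_zero, natCast_eq_zero_iff]
    exact Nat.not_dvd_of_pos_of_lt hk.1 hk.2
  have left_inv (v : (ZMod n)ˣ) (k : ℕ) (hk : k ∈ Ico 1 n) :
      (↑v⁻¹ * ((v * k : ZMod n).val : ZMod n)).val = k := by
    rw [natCast_zmod_val, Units.inv_mul_cancel_left, val_cast_of_lt (mem_Ico.1 hk).2]
  exact prod_nbij' (fun k ↦ (u * k : ZMod n).val) (fun k ↦ (↑u⁻¹ * k : ZMod n).val)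
    (maps_to u) (maps_to u⁻¹) (left_inv u) (by simpa using left_inv u⁻¹) fun _ _ ↦ rfl

variable {p : ℕ} [Fact p.Prime]

theorem pow_div_mul_pow_mod (x : ZMod p) (m : ℕ) : x ^ (m / p) * x ^ (m % p) = x ^ m := by
  conv_rhs => rw [← Nat.div_add_mod m p, pow_add, pow_mul, pow_card]

theorem prod_Ico_one_pow_self_pow_four : (∏ k ∈ Ico 1 p, (k : ZMod p) ^ k) ^ 4 = 1 := by
  have reflect : ∏ k ∈ Ico 1 p, (k : ZMod p) ^ k = ∏ k ∈ Ico 1 p, (-k : ZMod p) ^ (p - k) := by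
    have h := prod_Ico_reflect (fun k ↦ (k : ZMod p) ^ k) 1 (Nat.le_succ p)
    rw [Nat.add_sub_cancel_left, Nat.add_sub_cancel] at h
    rw [← h]
    refine prod_congr rfl fun k hk ↦ ?_
    rw [Nat.cast_sub (mem_Ico.1 hk).2.le, natCast_self, zero_sub]
  have sq_eq : (∏ k ∈ Ico 1 p, (k : ZMod p) ^ k) ^ 2 = -(-1) ^ ∑ k ∈ Ico 1 p, (p - k) := by
    have pair (k : ℕ) (hk : k ∈ Ico 1 p) :
        (k : ZMod p) ^ k * (-k : ZMod p) ^ (p - k) = (-1) ^ (p - k) * k := by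
      rw [neg_pow, mul_left_comm, ← pow_add, Nat.add_sub_cancel' (mem_Ico.1 hk).2.le, pow_card]
    rw [sq]
    nth_rw 2 [reflect]
    rw [← prod_mul_distrib, prod_congr rfl pair, prod_mul_distrib,
      prod_pow_eq_pow_sum, prod_Ico_one_prime, mul_neg_one]
  rw [show 4 = 2 * 2 from rfl, pow_mul, sq_eq, neg_sq, ← pow_mul, mul_comm, pow_mul, neg_one_sq,
    one_pow]

theorem prod_Ico_one_pow_val_mul_pow_four (c : ZMod p) :
    (∏ k ∈ Ico 1 p, (k : ZMod p) ^ (c * k).val) ^ 4 = 1 := by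
  rcases eq_or_ne c 0 with rfl | hc
  · simp
  obtain ⟨c, rfl⟩ := hc.isUnit
  have substitute : ∏ k ∈ Ico 1 p, (k : ZMod p) ^ (c * k : ZMod p).val =
      ∏ k ∈ Ico 1 p, (↑c⁻¹ * k : ZMod p) ^ k := by
    rw [← prod_Ico_one_val_unit_mul c fun k ↦ (↑c⁻¹ * k : ZMod p) ^ k]
    refine prod_congr rfl fun k _ ↦ ?_
    rw [natCast_zmod_val, Units.inv_mul_cancel_left]
  have gauss : (∑ k ∈ Ico 1 p, k) * 4 = (p - 1) * (2 * p) := by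
    have h := sum_range_id_mul_two p
    rw [range_eq_Ico, sum_eq_sum_Ico_succ_bot (Fact.out : p.Prime).pos, zero_add] at h
    rw [show 4 = 2 * 2 from rfl, ← mul_assoc, h]
    ring
  simp_rw [substitute, mul_pow]
  rw [prod_mul_distrib, prod_pow_eq_pow_sum, mul_pow, prod_Ico_one_pow_self_pow_four, mul_one,
    ← pow_mul, gauss, ← Units.val_pow_eq_pow_val, pow_mul, units_pow_card_sub_one_eq_one, one_pow,
    Units.val_one]

theorem prod_pow_div_mul_prod_pow_val_mul (a : ℕ) :
    (∏ k ∈ Ico 1 p, (k : ZMod p) ^ (a * k / p)) * ∏ k ∈ Ico 1 p, (k : ZMod p) ^ ((a : ZMod p) * k).val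
      = (∏ k ∈ Ico 1 p, (k : ZMod p) ^ k) ^ a := by
  rw [← prod_mul_distrib, ← prod_pow]
  refine prod_congr rfl fun k _ ↦ ?_
  rw [← Nat.cast_mul, val_natCast, pow_div_mul_pow_mod, ← pow_mul, mul_comm]

end ZMod

theorem prod_pow_floor_fourth_power_general (N a : ℕ) (hN : N.Prime) :
    (∏ k ∈ Finset.Icc 1 (N - 1), (k : ZMod N) ^ (a * k / N)) ^ 4 = 1 := by
  have := Fact.mk hN
  rw [Icc_sub_one_right_eq_Ico_of_not_isMin (by simpa using hN.ne_zero)]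
  calc _ = ((∏ k ∈ Ico 1 N, (k : ZMod N) ^ (a * k / N)) *
          ∏ k ∈ Ico 1 N, (k : ZMod N) ^ ((a : ZMod N) * k).val) ^ 4 := by
        rw [mul_pow, ZMod.prod_Ico_one_pow_val_mul_pow_four, mul_one]
    _ = ((∏ k ∈ Ico 1 N, (k : ZMod N) ^ k) ^ 4) ^ a := by
        rw [ZMod.prod_pow_div_mul_prod_pow_val_mul, ← pow_mul, ← pow_mul, mul_comm]
    _ = 1 := by rw [ZMod.prod_Ico_one_pow_self_pow_four, one_pow]

/-- For `N` an odd prime and `a ≥ 1`, `(∏_{k=1}^{N-1} k^{⌊ak/N⌋})^4 ≡ 1 (mod N)`. -/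
theorem prod_pow_floor_fourth_power (N a : ℕ) (hN : N.Prime) (hNodd : Odd N) (ha : 1 ≤ a) :
    (∏ k ∈ Finset.Icc 1 (N - 1), (k : ZMod N) ^ (a * k / N)) ^ 4 = 1 :=
  prod_pow_floor_fourth_power_general N a hN
end

section
/- Let N and p be primes with p dividing N-1, let ν be the p-adic valuation of N-1, and let log : (Z/NZ)^× → Z/p^ν Z be a surjective group homomorphism. Then ∑_{k=1}^{N-1} k²·log(k) ≡ (-4/3)·∑_{k=1}^{(N-1)/2} k·log(k) (mod p^ν). -/
/-
Write `N = 2n + 1`, `L k = dlog log k`, `A = ∑_{k ≤ n} k L k` and `B = ∑_{k ≤ n} k² L k`.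
As `p` is odd, `p ^ ν ∣ n`, so `n = 0` and `N = 1` in `ZMod (p ^ ν)`, where `2`, `3` are units.
Then `L (-1) = 0`, hence `L (N - k) = L k`, and Wilson's theorem gives `∑_{k ≤ n} L k = 0`.
Computing `S = ∑_{k < N} k² L k` once by pairing `k` with `N - k`, and once along `k ↦ 2k mod N`,
i.e. over the pairs `2k`, `N - 2k` for `k ≤ n`, using `L (2k) = L 2 + L k` and `∑_{k < N} k² = 0`,
gives `S = 2B - 2A = 8B - 4A`. So `A = 3B` and `3S = -4A`.
-/

open Classical in
/-- The discrete logarithm attached to a homomorphism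
`log : (Z/NZ)ˣ → Z/MZ`, extended by `0` to non-units of `Z/NZ`. -/
noncomputable def dlog {N M : ℕ} (log : (ZMod N)ˣ →* Multiplicative (ZMod M))
    (x : ZMod N) : ZMod M :=
  if h : IsUnit x then Multiplicative.toAdd (log h.unit) else 0

open Finset

section IntervalSums

variable {M : Type*} [AddCommMonoid M]

theorem sum_Icc_add (f : ℕ → M) (m n : ℕ) :
    ∑ k ∈ Icc 1 (m + n), f k = ∑ k ∈ Icc 1 m, f k + ∑ k ∈ Icc 1 n, f (m + k) := by
  induction n with
  | zero => simp
  | succ n ih =>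
    rw [← add_assoc, sum_Icc_succ_top (by omega), ih, sum_Icc_succ_top (by omega), add_assoc]
    rfl

theorem sum_Icc_reflect (f : ℕ → M) (n : ℕ) :
    ∑ k ∈ Icc 1 n, f (n + 1 - k) = ∑ k ∈ Icc 1 n, f k :=
  sum_nbij' (n + 1 - ·) (n + 1 - ·) (by simp only [mem_Icc]; omega)
    (by simp only [mem_Icc]; omega) (by simp only [mem_Icc]; omega)
    (by simp only [mem_Icc]; omega) fun _ _ => rfl

theorem sum_Icc_two_mul_eq_sum_add_reflect (f : ℕ → M) (n : ℕ) :
    ∑ k ∈ Icc 1 (2 * n), f k = ∑ k ∈ Icc 1 n, (f k + f (2 * n + 1 - k)) := by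
  rw [two_mul, sum_Icc_add, sum_add_distrib, ← sum_Icc_reflect (fun k => f (n + k))]
  refine congrArg _ (sum_congr rfl fun k hk => ?_)
  rw [mem_Icc] at hk
  congr 1
  omega

theorem sum_Icc_two_mul_eq_sum_even_add_odd (f : ℕ → M) (n : ℕ) :
    ∑ k ∈ Icc 1 (2 * n), f k = ∑ k ∈ Icc 1 n, (f (2 * k) + f (2 * k - 1)) := by
  induction n with
  | zero => simp
  | succ n ih =>
    rw [sum_Icc_succ_top (by omega), mul_add_one, sum_Icc_succ_top (by omega),
      sum_Icc_succ_top (by omega), ih, add_assoc, add_comm (f _)]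
    rfl

theorem sum_Icc_two_mul_eq_sum_double_add_reflect (f : ℕ → M) (n : ℕ) :
    ∑ k ∈ Icc 1 (2 * n), f k = ∑ k ∈ Icc 1 n, (f (2 * k) + f (2 * n + 1 - 2 * k)) := by
  rw [sum_Icc_two_mul_eq_sum_even_add_odd, sum_add_distrib, sum_add_distrib,
    ← sum_Icc_reflect (fun k => f (2 * k - 1))]
  refine congrArg _ (sum_congr rfl fun k hk => ?_)
  rw [mem_Icc] at hk
  congr 1
  omega

end IntervalSums

section WeightedSums

variable {R : Type*} [CommRing R]

theorem six_mul_sum_Icc_sq (m : ℕ) :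
    6 * ∑ k ∈ Icc 1 m, (k : R) ^ 2 = m * (m + 1) * (2 * m + 1) := by
  induction m with
  | zero => simp
  | succ m ih =>
    rw [sum_Icc_succ_top (by omega), mul_add, ih]
    push_cast
    ring

theorem sum_quadratic_mul (s : Finset ℕ) (L : ℕ → R) (a b c : R) :
    ∑ k ∈ s, (a * (k : R) ^ 2 + b * k + c) * L k
      = a * ∑ k ∈ s, (k : R) ^ 2 * L k + b * ∑ k ∈ s, (k : R) * L k
        + c * ∑ k ∈ s, L k := by
  simp only [add_mul, sum_add_distrib, mul_sum, mul_assoc]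

variable {n : ℕ} (hn : (n : R) = 0)
include hn

theorem natCast_two_mul_add_one_sub {k : ℕ} (hk : k ≤ 2 * n + 1) :
    ((2 * n + 1 - k : ℕ) : R) = 1 - k := by
  rw [Nat.cast_sub hk]
  push_cast
  rw [hn]
  ring

theorem sum_Icc_sq_eq_zero (h2 : IsUnit (2 : R)) (h3 : IsUnit (3 : R)) :
    ∑ k ∈ Icc 1 (2 * n), (k : R) ^ 2 = 0 := by
  have h6 : IsUnit (6 : R) := by simpa [show (6 : R) = 2 * 3 by norm_num] using h2.mul h3
  refine h6.mul_left_cancel ?_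
  rw [six_mul_sum_Icc_sq]
  push_cast
  rw [hn]
  ring

theorem sum_sq_mul_eq_of_reflect (L : ℕ → R) (hL : ∀ k ∈ Icc 1 n, L (2 * n + 1 - k) = L k) :
    ∑ k ∈ Icc 1 (2 * n), (k : R) ^ 2 * L k
      = ∑ k ∈ Icc 1 n, ((k : R) ^ 2 + (1 - k) ^ 2) * L k := by
  rw [sum_Icc_two_mul_eq_sum_add_reflect]
  refine sum_congr rfl fun k hk => ?_
  rw [hL k hk, natCast_two_mul_add_one_sub hn (by rw [mem_Icc] at hk; omega)]
  ring

theorem sum_sq_mul_eq_of_double (L : ℕ → R) (c : R)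
    (hL : ∀ k ∈ Icc 1 n, L (2 * k) = c + L k ∧ L (2 * n + 1 - 2 * k) = c + L k) :
    ∑ k ∈ Icc 1 (2 * n), (k : R) ^ 2 * L k
      = c * ∑ k ∈ Icc 1 (2 * n), (k : R) ^ 2
        + ∑ k ∈ Icc 1 n, (4 * (k : R) ^ 2 + (1 - 2 * k) ^ 2) * L k := by
  rw [sum_Icc_two_mul_eq_sum_double_add_reflect, sum_Icc_two_mul_eq_sum_double_add_reflect,
    mul_sum, ← sum_add_distrib]
  refine sum_congr rfl fun k hk => ?_
  obtain ⟨hLeven, hLodd⟩ := hL k hk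
  rw [hLeven, hLodd, natCast_two_mul_add_one_sub hn (by rw [mem_Icc] at hk; omega)]
  push_cast
  ring

theorem three_mul_sum_sq_mul_eq (h2 : IsUnit (2 : R)) (h3 : IsUnit (3 : R)) (L : ℕ → R) (c : R)
    (hreflect : ∀ k ∈ Icc 1 (2 * n), L (2 * n + 1 - k) = L k)
    (hdouble : ∀ k ∈ Icc 1 n, L (2 * k) = c + L k) (hhalf : ∑ k ∈ Icc 1 n, L k = 0) :
    3 * ∑ k ∈ Icc 1 (2 * n), (k : R) ^ 2 * L k = -4 * ∑ k ∈ Icc 1 n, (k : R) * L k := by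
  set A := ∑ k ∈ Icc 1 n, (k : R) * L k
  set B := ∑ k ∈ Icc 1 n, (k : R) ^ 2 * L k
  set H := ∑ k ∈ Icc 1 n, L k
  have hr : ∑ k ∈ Icc 1 (2 * n), (k : R) ^ 2 * L k = 2 * B + (-2) * A + 1 * H := by
    rw [sum_sq_mul_eq_of_reflect hn L
      fun k hk => hreflect k (by simp only [mem_Icc] at hk ⊢; omega), ← sum_quadratic_mul]
    exact sum_congr rfl fun k _ => by ring
  have hd : ∑ k ∈ Icc 1 (2 * n), (k : R) ^ 2 * L k = 8 * B + (-4) * A + 1 * H := by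
    rw [sum_sq_mul_eq_of_double hn L c, sum_Icc_sq_eq_zero hn h2 h3, mul_zero, zero_add,
      ← sum_quadratic_mul]
    · exact sum_congr rfl fun k _ => by ring
    · intro k hk
      rw [mem_Icc] at hk
      rw [hreflect (2 * k) (by rw [mem_Icc]; omega)]
      exact ⟨hdouble k (by rw [mem_Icc]; omega), hdouble k (by rw [mem_Icc]; omega)⟩
  have hA : A = 3 * B := h2.mul_left_cancel (by linear_combination hd - hr)
  linear_combination 3 * hr - 2 * hA + 3 * hhalf

end WeightedSums

section DiscreteLog

variable {N M : ℕ} (log : (ZMod N)ˣ →* Multiplicative (ZMod M))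

theorem dlog_coe_unit (u : (ZMod N)ˣ) : dlog log u = Multiplicative.toAdd (log u) := by
  rw [dlog, dif_pos u.isUnit, IsUnit.unit_of_val_units]

theorem dlog_one : dlog log 1 = 0 := by
  simpa using dlog_coe_unit log 1

theorem dlog_mul {x y : ZMod N} (hx : IsUnit x) (hy : IsUnit y) :
    dlog log (x * y) = dlog log x + dlog log y := by
  obtain ⟨u, rfl⟩ := hx
  obtain ⟨v, rfl⟩ := hy
  rw [← Units.val_mul, dlog_coe_unit, dlog_coe_unit, dlog_coe_unit, map_mul, toAdd_mul]

theorem dlog_prod {ι : Type*} (s : Finset ι) (f : ι → ZMod N)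
    (hf : ∀ i ∈ s, IsUnit (f i)) :
    dlog log (∏ i ∈ s, f i) = ∑ i ∈ s, dlog log (f i) := by
  classical
  induction s using Finset.induction_on with
  | empty => simp [dlog_one]
  | insert a s ha ih =>
    rw [prod_insert ha, sum_insert ha, dlog_mul log (hf a (mem_insert_self a s))
      (IsUnit.prod_iff.2 fun i hi => hf i (mem_insert_of_mem hi)),
      ih fun i hi => hf i (mem_insert_of_mem hi)]

theorem dlog_neg_one (h2 : IsUnit (2 : ZMod M)) : dlog log (-1) = 0 := by
  have h := dlog_mul log isUnit_one.neg isUnit_one.neg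
  rw [neg_one_mul, neg_neg, dlog_one] at h
  exact h2.mul_left_cancel (by linear_combination -h)

variable (hN : N.Prime)
include hN

theorem isUnit_natCast_of_mem_Icc {k : ℕ} (hk : k ∈ Icc 1 (N - 1)) : IsUnit (k : ZMod N) := by
  have := Fact.mk hN
  rw [mem_Icc] at hk
  rw [isUnit_iff_ne_zero, Ne, ZMod.natCast_eq_zero_iff]
  exact fun h => absurd (Nat.le_of_dvd (by omega) h) (by omega)

theorem sum_Icc_dlog_eq_zero (h2 : IsUnit (2 : ZMod M)) :
    ∑ k ∈ Icc 1 (N - 1), dlog log (k : ZMod N) = 0 := by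
  have := Fact.mk hN
  rw [← dlog_prod log _ _ fun k hk => isUnit_natCast_of_mem_Icc hN hk, ← Nat.cast_prod,
    ← Ico_add_one_right_eq_Icc, prod_Ico_id_eq_factorial, ZMod.wilsons_lemma,
    dlog_neg_one log h2]

theorem dlog_natCast_sub (h2 : IsUnit (2 : ZMod M)) {k : ℕ} (hk : k ∈ Icc 1 (N - 1)) :
    dlog log ((N - k : ℕ) : ZMod N) = dlog log (k : ZMod N) := by
  rw [Nat.cast_sub (by rw [mem_Icc] at hk; omega), ZMod.natCast_self, zero_sub, ← neg_one_mul,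
    dlog_mul log isUnit_one.neg (isUnit_natCast_of_mem_Icc hN hk), dlog_neg_one log h2, zero_add]

theorem dlog_natCast_two_mul (hN2 : N ≠ 2) {k : ℕ} (hk : k ∈ Icc 1 (N - 1)) :
    dlog log ((2 * k : ℕ) : ZMod N) = dlog log 2 + dlog log (k : ZMod N) := by
  have h2 : IsUnit (2 : ZMod N) := by
    have := hN.two_le
    simpa using isUnit_natCast_of_mem_Icc hN (k := 2) (mem_Icc.2 ⟨by omega, by omega⟩)
  rw [Nat.cast_mul, Nat.cast_ofNat, dlog_mul log h2 (isUnit_natCast_of_mem_Icc hN hk)]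

end DiscreteLog

theorem sum_Icc_half_dlog_eq_zero {n M : ℕ} (hN : (2 * n + 1).Prime)
    (log : (ZMod (2 * n + 1))ˣ →* Multiplicative (ZMod M)) (h2 : IsUnit (2 : ZMod M)) :
    ∑ k ∈ Icc 1 n, dlog log (k : ZMod (2 * n + 1)) = 0 := by
  have h := sum_Icc_dlog_eq_zero log hN h2
  rw [Nat.add_sub_cancel, sum_Icc_two_mul_eq_sum_add_reflect] at h
  refine h2.mul_left_cancel ?_
  rw [mul_zero, ← h, mul_sum]
  refine sum_congr rfl fun k hk => ?_
  rw [dlog_natCast_sub log hN h2 (by simp only [mem_Icc] at hk ⊢; omega)]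
  ring

theorem isUnit_natCast_prime_of_ne {q p : ℕ} (hq : q.Prime) (hp : p.Prime) (hqp : q ≠ p)
    (ν : ℕ) : IsUnit (q : ZMod (p ^ ν)) :=
  ZMod.isUnit_prime_of_not_dvd hq fun h =>
    hqp ((Nat.prime_dvd_prime_iff_eq hq hp).1 (hq.dvd_of_dvd_pow h))

theorem sum_sq_log_eq_neg_four_thirds_general (p N ν : ℕ) (hp : p.Prime) (hN : N.Prime)
    (hp5 : 5 ≤ p) (hN5 : 5 ≤ N)
    (hν : ν = (N - 1).factorization p)
    (log : (ZMod N)ˣ →* Multiplicative (ZMod (p ^ ν))) :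
    ∑ k ∈ Finset.Icc 1 (N - 1), (k : ZMod (p ^ ν)) ^ 2 * dlog log (k : ZMod N)
      = ((-4 : ZMod (p ^ ν)) * (3 : ZMod (p ^ ν))⁻¹) *
        ∑ k ∈ Finset.Icc 1 ((N - 1) / 2), (k : ZMod (p ^ ν)) * dlog log (k : ZMod N) := by
  have h2 : IsUnit (2 : ZMod (p ^ ν)) := by
    simpa using isUnit_natCast_prime_of_ne Nat.prime_two hp (by omega) ν
  have h3 : IsUnit (3 : ZMod (p ^ ν)) := by
    simpa using isUnit_natCast_prime_of_ne Nat.prime_three hp (by omega) ν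
  obtain ⟨n, rfl⟩ := hN.odd_of_ne_two (by omega)
  rw [Nat.add_sub_cancel] at hν ⊢
  have hn : (n : ZMod (p ^ ν)) = 0 := by
    have h2n : ((2 * n : ℕ) : ZMod (p ^ ν)) = 0 :=
      (ZMod.natCast_eq_zero_iff _ _).2 (hν ▸ Nat.ordProj_dvd (2 * n) p)
    exact h2.mul_left_cancel (by rw [mul_zero, ← h2n, Nat.cast_mul, Nat.cast_ofNat])
  have key := three_mul_sum_sq_mul_eq hn h2 h3 (fun k => dlog log (k : ZMod (2 * n + 1)))
    (dlog log 2) (fun k hk => dlog_natCast_sub log hN h2 (by rwa [Nat.add_sub_cancel]))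
    (fun k hk => dlog_natCast_two_mul log hN (by omega) (by simp only [mem_Icc] at hk ⊢; omega))
    (sum_Icc_half_dlog_eq_zero hN log h2)
  rw [Nat.mul_div_cancel_left n two_pos, mul_comm (-4 : ZMod (p ^ ν)), mul_assoc, ← key,
    ← mul_assoc, ZMod.inv_mul_of_unit _ h3, one_mul]

/-- For primes `N, p ≥ 5` with `p ∣ N-1`, `ν = v_p(N-1)`, and a surjective
homomorphism `log : (Z/NZ)ˣ → Z/p^ν Z`, one has
`∑_{k=1}^{N-1} k²·log(k) ≡ (-4/3)·∑_{k=1}^{(N-1)/2} k·log(k) (mod p^ν)`. -/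
theorem sum_sq_log_eq_neg_four_thirds (p N ν : ℕ) (hp : p.Prime) (hN : N.Prime)
    (hp5 : 5 ≤ p) (hN5 : 5 ≤ N) (hdvd : p ∣ N - 1)
    (hν : ν = (N - 1).factorization p)
    (log : (ZMod N)ˣ →* Multiplicative (ZMod (p ^ ν)))
    (hlog : Function.Surjective log) :
    ∑ k ∈ Finset.Icc 1 (N - 1), (k : ZMod (p ^ ν)) ^ 2 * dlog log (k : ZMod N)
      = ((-4 : ZMod (p ^ ν)) * (3 : ZMod (p ^ ν))⁻¹) *
        ∑ k ∈ Finset.Icc 1 ((N - 1) / 2), (k : ZMod (p ^ ν)) * dlog log (k : ZMod N) :=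
  sum_sq_log_eq_neg_four_thirds_general p N ν hp hN hp5 hN5 hν log
end

section
/- Let p be a prime, S a cyclic group of order p with generator σ, and δ = ∑_{i=0}^{p-1} [σ^i] in the group ring Z_p[S]. Then p belongs to the coset (([σ]-1)^{p-1} - δ)·Z_p[S]^×; i.e., there is a unit u of Z_p[S] with p = (([σ]-1)^{p-1} - δ)·u. -/
/-! With `t = [σ] - 1`, the hockey-stick identity gives `δ = ∑ (t + 1)^i = t^(p-1) + p q` with
`q ≡ 1 mod t`, so `([σ] - 1)^(p-1) - δ = -p q` and it remains to see that `q` is a unit.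
As `ℤ_p[S]` is finite over the local ring `ℤ_p`, `p` lies in its Jacobson radical; from
`(t + 1)^p = 1` we get `t^p = -p q t`, so `t`, and with it `q - 1`, lies there as well. -/

open Finset

section CommRing

variable {R : Type*} [CommRing R]

theorem geom_sum_add_one_eq_sum_choose (x : R) :
    ∀ n : ℕ, ∑ i ∈ range n, (x + 1) ^ i = ∑ k ∈ range n, (n.choose (k + 1) : R) * x ^ k
  | 0 => by simp
  | n + 1 => by
    rw [sum_range_succ, geom_sum_add_one_eq_sum_choose x n, add_pow]
    simp only [one_pow, mul_one, Nat.choose_succ_succ', Nat.cast_add, add_mul, sum_add_distrib]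
    rw [sum_range_succ (fun k => (n.choose (k + 1) : R) * x ^ k), Nat.choose_succ_self]
    simp only [Nat.cast_zero, mul_comm]
    ring

theorem Nat.Prime.exists_geom_sum_add_one_eq {p : ℕ} (hp : p.Prime) (x : R) :
    ∃ q : R, ∑ i ∈ range p, (x + 1) ^ i = x ^ (p - 1) + p * q ∧ x ∣ q - 1 := by
  refine ⟨∑ k ∈ range (p - 1), ((p.choose (k + 1) / p : ℕ) : R) * x ^ k, ?_, ?_⟩
  · obtain ⟨n, rfl⟩ : ∃ n, p = n + 1 := ⟨p - 1, (Nat.sub_add_cancel hp.one_le).symm⟩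
    rw [geom_sum_add_one_eq_sum_choose, sum_range_succ, Nat.choose_self, Nat.add_sub_cancel,
      mul_sum, Nat.cast_one, one_mul, add_comm]
    refine congrArg _ (sum_congr rfl fun k hk => ?_)
    rw [← mul_assoc, ← Nat.cast_mul, Nat.mul_div_cancel' (hp.dvd_choose_self k.succ_ne_zero
      (by simpa using hk))]
  · obtain ⟨n, hn⟩ : ∃ n, p - 1 = n + 1 := ⟨p - 2, by have := hp.two_le; omega⟩
    rw [hn, sum_range_succ', Nat.choose_one_right, Nat.div_self hp.pos, Nat.cast_one, pow_zero,
      mul_one, add_sub_cancel_right]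
    exact dvd_sum fun k _ => dvd_mul_of_dvd_right (dvd_pow_self x k.succ_ne_zero) _

theorem Nat.Prime.exists_unit_natCast_eq_mul {p : ℕ} (hp : p.Prime)
    (hpJ : (p : R) ∈ (⊥ : Ideal R).jacobson) {t : R} (ht : (t + 1) ^ p = 1) :
    ∃ u : Rˣ, (p : R) = (t ^ (p - 1) - ∑ i ∈ range p, (t + 1) ^ i) * u := by
  obtain ⟨q, hsum, hq⟩ := hp.exists_geom_sum_add_one_eq t
  have htp : t ^ p = -(p * (q * t)) := by
    have := geom_sum_mul_add t p
    rw [hsum, ht, add_mul, pow_sub_one_mul hp.ne_zero] at this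
    linear_combination this
  have htJ : t ∈ (⊥ : Ideal R).jacobson :=
    Ideal.isRadical_jacobson ⊥ ⟨p, htp ▸ neg_mem (Ideal.mul_mem_right _ _ hpJ)⟩
  have hqu : IsUnit q := by
    obtain ⟨r, hr⟩ := hq
    exact Ideal.isUnit_of_sub_one_mem_jacobson_bot q (hr ▸ Ideal.mul_mem_right _ _ htJ)
  refine ⟨-hqu.unit⁻¹, ?_⟩
  rw [hsum, Units.val_neg, sub_add_cancel_left, neg_mul_neg, mul_assoc, IsUnit.mul_val_inv,
    mul_one]

end CommRing

theorem algebraMap_mem_jacobson_bot {A R : Type*} [CommRing A] [IsLocalRing A] [CommRing R]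
    [Algebra A R] [Algebra.IsIntegral A R] {a : A} (ha : a ∈ IsLocalRing.maximalIdeal A) :
    algebraMap A R a ∈ (⊥ : Ideal R).jacobson :=
  Ideal.mem_sInf.mpr fun J ⟨_, hJ⟩ => by
    rwa [← Ideal.mem_comap,
      IsLocalRing.eq_maximalIdeal (Ideal.isMaximal_comap_of_isIntegral_of_isMaximal J)]

theorem padic_groupRing_unit_coset_general (p : ℕ) [hp : Fact p.Prime]
    (S : Type) [Group S] [Fintype S] (hcard : Fintype.card S = p) (σ : S) :
    ∃ u : (MonoidAlgebra ℤ_[p] S)ˣ,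
      (p : MonoidAlgebra ℤ_[p] S) =
        ((MonoidAlgebra.of ℤ_[p] S σ - 1) ^ (p - 1)
            - ∑ i ∈ Finset.range p, MonoidAlgebra.of ℤ_[p] S (σ ^ i)) * u := by
  let : CommGroup S := (isCyclic_of_prime_card (Nat.card_eq_fintype_card.trans hcard)).commGroup
  have hpJ : (p : MonoidAlgebra ℤ_[p] S) ∈ (⊥ : Ideal _).jacobson := by
    simpa only [map_natCast] using algebraMap_mem_jacobson_bot (R := MonoidAlgebra ℤ_[p] S)
      PadicInt.p_nonunit
  have hσp : (MonoidAlgebra.of ℤ_[p] S σ - 1 + 1) ^ p = 1 := by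
    rw [sub_add_cancel, ← map_pow, show σ ^ p = 1 from hcard ▸ pow_card_eq_one, map_one]
  simpa only [sub_add_cancel, map_pow] using hp.out.exists_unit_natCast_eq_mul hpJ hσp

/-- Let `p` be a prime, `S` a cyclic group of order `p` with generator `σ`, and
`δ = ∑_{i=0}^{p-1} [σ^i]` in the group ring `ℤ_p[S]`. Then `p` belongs to the coset
`(([σ]-1)^{p-1} - δ)·ℤ_p[S]ˣ`. -/
theorem padic_groupRing_unit_coset (p : ℕ) [hp : Fact p.Prime]
    (S : Type) [Group S] [Fintype S] (hcard : Fintype.card S = p)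
    (σ : S) (hσ : ∀ x : S, x ∈ Subgroup.zpowers σ) :
    ∃ u : (MonoidAlgebra ℤ_[p] S)ˣ,
      (p : MonoidAlgebra ℤ_[p] S) =
        ((MonoidAlgebra.of ℤ_[p] S σ - 1) ^ (p - 1)
            - ∑ i ∈ Finset.range p, MonoidAlgebra.of ℤ_[p] S (σ ^ i)) * u :=
  padic_groupRing_unit_coset_general p (hp := hp) S hcard σ
end

section
/- Let p be an odd prime, T = (Z/pZ)^× acting on Z_p[T], ω : T → Z_p^× the Teichmüller character, and Δ = (1/(p-1))·∑_{τ∈T} ω(τ^{-1})·[σ_{ω(τ)}] interpreted in Z_p[T] (identifying σ_a with a). Then Δ generates the augmentation ideal of Z_p[T], and for every character ψ : T → Z_p^×, one has e_{ψ·ω}·Δ = Δ·e_ψ, where e_ψ = (1/(p-1))·∑_{τ∈T} ψ(τ^{-1})·[τ]. -/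
/-- The twisted element `Δ = (1/(p-1))·∑_{τ∈T} ω(τ⁻¹)·[σ^{ω(τ)}]` of the group ring
`ℤ_p[G]` (where `σ^{ω(τ)} = σ^{τ}` since `σ` has order `p` and `ω(τ) ≡ τ (mod p)`). -/
noncomputable def jaulentDelta (p : ℕ) [Fact p.Prime] {G : Type} [Group G]
    (ω : (ZMod p)ˣ →* ℤ_[p]ˣ) (σ : G) : MonoidAlgebra ℤ_[p] G :=
  Ring.inverse ((p : ℤ_[p]) - 1) •
    ∑ τ : (ZMod p)ˣ, ((ω τ⁻¹ : ℤ_[p]ˣ) : ℤ_[p]) •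
      MonoidAlgebra.of ℤ_[p] G (σ ^ ((τ : ZMod p).val))

/-- The idempotent `e_ψ = (1/(p-1))·∑_{τ∈T} ψ(τ⁻¹)·[τ]` attached to a character
`ψ : T → ℤ_p^×`, viewed in `ℤ_p[G]` through an embedding `ι : T → G`. -/
noncomputable def charIdem (p : ℕ) [Fact p.Prime] {G : Type} [Group G]
    (ι : (ZMod p)ˣ →* G) (ψ : (ZMod p)ˣ →* ℤ_[p]ˣ) : MonoidAlgebra ℤ_[p] G :=
  Ring.inverse ((p : ℤ_[p]) - 1) •
    ∑ τ : (ZMod p)ˣ, ((ψ τ⁻¹ : ℤ_[p]ˣ) : ℤ_[p]) • MonoidAlgebra.of ℤ_[p] G (ι τ)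

/-!
The values `ω(τ⁻¹)` sum to zero, so `Δ = ([σ] - 1)·u` with
`u = (1/(p-1))·∑_τ ω(τ⁻¹)·(1 + [σ] + ⋯ + [σ]^(τ-1))`, and `[σ] - 1` generates the augmentation
ideal of `ℤ_p[⟨σ⟩]`. The cofactor `u` is a unit: its augmentation is `≡ -∑_τ τ⁻¹·τ = 1 (mod p)`,
and the augmentation ideal lies in the Jacobson radical, because every maximal ideal of the group
ring contains `p` (the group ring is integral over `ℤ_p`) and `([σ] - 1)^p ≡ [σ]^p - 1 = 0`
modulo `p`. The shift identity follows from `[ι τ]·[σ^υ] = [σ^(τυ)]·[ι τ]` by reindexing `υ ↦ τυ`.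
-/

open Finset

section Jacobson

variable {A R : Type*} [CommRing A] [CommRing R]

theorem algebraMap_mem_jacobson_bot_of_isIntegral [Algebra A R] [Algebra.IsIntegral A R] {a : A}
    (ha : a ∈ Ideal.jacobson (⊥ : Ideal A)) :
    algebraMap A R a ∈ Ideal.jacobson (⊥ : Ideal R) := by
  rw [Ideal.jacobson, Submodule.mem_sInf]
  rintro m ⟨-, hm⟩
  have := Ideal.isMaximal_comap_of_isIntegral_of_isMaximal (R := A) m
  exact Ideal.mem_comap.mp (Submodule.mem_sInf.mp ha _ ⟨bot_le, this⟩)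

theorem sub_one_mem_jacobson_bot_of_pow_eq_one {p : ℕ} (hp : p.Prime)
    (hpR : (p : R) ∈ Ideal.jacobson (⊥ : Ideal R)) {g : R} (hg : g ^ p = 1) :
    g - 1 ∈ Ideal.jacobson (⊥ : Ideal R) := by
  rw [Ideal.jacobson, Submodule.mem_sInf]
  rintro m ⟨-, hm⟩
  have hpm : (p : R ⧸ m) = 0 := by
    rw [← map_natCast (Ideal.Quotient.mk m), Ideal.Quotient.eq_zero_iff_mem]
    exact Submodule.mem_sInf.mp hpR _ ⟨bot_le, hm⟩
  have : Fact p.Prime := ⟨hp⟩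
  have : CharP (R ⧸ m) p := (CharP.charP_iff_prime_eq_zero hp).mpr hpm
  rw [← Ideal.Quotient.eq_zero_iff_mem]
  refine pow_eq_zero_iff hp.ne_zero |>.mp ?_
  rw [map_sub, map_one, sub_pow_char, ← map_pow, hg, map_one, one_pow, sub_self]

theorem isUnit_of_isUnit_of_ker_le_jacobson_bot [Algebra A R] (ε : R →ₐ[A] A)
    (hε : RingHom.ker ε ≤ Ideal.jacobson (⊥ : Ideal R)) {u : R} (hu : IsUnit (ε u)) :
    IsUnit u := by
  have := isLocalHom_of_le_jacobson_bot _ hε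
  refine isUnit_of_map_unit (Ideal.Quotient.mk (RingHom.ker ε)) u ?_
  have hmk : Ideal.Quotient.mk (RingHom.ker ε) u
      = Ideal.Quotient.mk (RingHom.ker ε) (algebraMap A R (ε u)) := by
    rw [Ideal.Quotient.eq, RingHom.mem_ker, map_sub, AlgHom.commutes, Algebra.algebraMap_self,
      RingHom.id_apply, sub_self]
  rw [hmk]
  exact (hu.map (algebraMap A R)).map _

end Jacobson

namespace MonoidAlgebra

variable {k H : Type*} [CommRing k]

theorem sub_algebraMap_lift_one_mem_span_of_sub_one [Monoid H] {s : H}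
    (hs : ∀ g, g ∈ Submonoid.powers s) (x : MonoidAlgebra k H) :
    x - algebraMap k _ (lift k k H 1 x) ∈ Ideal.span {of k H s - 1} := by
  induction x using MonoidAlgebra.induction_on with
  | of g =>
    obtain ⟨n, rfl⟩ := hs g
    rw [lift_of, MonoidHom.one_apply, map_one, map_pow, ← geom_sum_mul]
    exact Ideal.mul_mem_left _ _ (Ideal.mem_span_singleton_self _)
  | add x y hx hy => simpa only [map_add, add_sub_add_comm] using add_mem hx hy
  | smul r x hx =>
    rw [map_smul, smul_eq_mul, map_mul, Algebra.smul_def, ← mul_sub]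
    exact Ideal.mul_mem_left _ _ hx

theorem ker_lift_one_eq_span_of_sub_one [Monoid H] {s : H} (hs : ∀ g, g ∈ Submonoid.powers s) :
    RingHom.ker (lift k k H 1).toRingHom = Ideal.span {of k H s - 1} := by
  refine le_antisymm (fun x hx => ?_) ?_
  · have hx0 : lift k k H 1 x = 0 := hx
    simpa [hx0] using sub_algebraMap_lift_one_mem_span_of_sub_one hs x
  · rw [Ideal.span_le, Set.singleton_subset_iff, SetLike.mem_coe, RingHom.mem_ker]
    simp

theorem ker_lift_one_le_jacobson_bot [CommMonoid H] [Finite H] {p : ℕ} (hp : p.Prime)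
    (hpk : (p : k) ∈ Ideal.jacobson (⊥ : Ideal k)) {s : H} (hs : s ^ p = 1)
    (hgen : ∀ g, g ∈ Submonoid.powers s) :
    RingHom.ker (lift k k H 1).toRingHom ≤ Ideal.jacobson (⊥ : Ideal (MonoidAlgebra k H)) := by
  rw [ker_lift_one_eq_span_of_sub_one hgen, Ideal.span_le, Set.singleton_subset_iff]
  refine sub_one_mem_jacobson_bot_of_pow_eq_one hp ?_ (by rw [← map_pow, hs, map_one])
  simpa using algebraMap_mem_jacobson_bot_of_isIntegral (R := MonoidAlgebra k H) hpk

end MonoidAlgebra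

theorem sum_smul_pow_eq_sub_one_mul {ι k R : Type*} [CommRing k] [Ring R] [Algebra k R]
    (s : Finset ι) (a : ι → k) (n : ι → ℕ) (ha : ∑ i ∈ s, a i = 0) (x : R) :
    ∑ i ∈ s, a i • x ^ n i = (x - 1) * ∑ i ∈ s, a i • ∑ j ∈ range (n i), x ^ j := by
  simp_rw [mul_sum, mul_smul_comm, mul_geom_sum, smul_sub, sum_sub_distrib, ← sum_smul,
    ha, zero_smul, sub_zero]

theorem sum_units_val_map_inv_eq_zero {G R : Type*} [Group G] [Fintype G] [CommRing R]
    [IsDomain R] (f : G →* Rˣ) (hf : f ≠ 1) : ∑ g, (f g⁻¹ : R) = 0 := by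
  refine (Equiv.sum_comp (Equiv.inv G) fun g => (f g : R)).trans
    (sum_hom_units_eq_zero ((Units.coeHom R).comp f) fun h => hf ?_)
  exact MonoidHom.ext fun g => Units.ext (DFunLike.congr_fun h g)

theorem PadicInt.isUnit_iff_toZMod_ne_zero {p : ℕ} [Fact p.Prime] {x : ℤ_[p]} :
    IsUnit x ↔ PadicInt.toZMod x ≠ 0 := by
  rw [← IsLocalRing.notMem_maximalIdeal, ← PadicInt.ker_toZMod, RingHom.mem_ker]

noncomputable def jaulentDeltaCofactor (p : ℕ) [Fact p.Prime] {G : Type} [Group G]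
    (ω : (ZMod p)ˣ →* ℤ_[p]ˣ) (σ : G) : MonoidAlgebra ℤ_[p] G :=
  Ring.inverse ((p : ℤ_[p]) - 1) •
    ∑ τ : (ZMod p)ˣ, ((ω τ⁻¹ : ℤ_[p]ˣ) : ℤ_[p]) •
      ∑ i ∈ range (τ : ZMod p).val, MonoidAlgebra.of ℤ_[p] G σ ^ i

section Teichmuller

variable {p : ℕ} [hp : Fact p.Prime] {ω : (ZMod p)ˣ →* ℤ_[p]ˣ}

theorem ne_one_of_forall_toZMod_eq (hodd : Odd p)
    (hω : ∀ a : (ZMod p)ˣ, PadicInt.toZMod ((ω a : ℤ_[p]ˣ) : ℤ_[p]) = (a : ZMod p)) :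
    ω ≠ 1 := by
  have : Fact (2 < p) :=
    ⟨hp.out.two_le.lt_of_ne' fun h => by subst h; exact absurd hodd (by decide)⟩
  intro h
  have h1 := hω (-1)
  rw [h, MonoidHom.one_apply, Units.val_one, map_one, Units.val_neg, Units.val_one] at h1
  exact ZMod.neg_one_ne_one h1.symm

variable {G : Type} [Group G]

theorem jaulentDelta_eq_sub_one_mul_cofactor (hω : ω ≠ 1) (σ : G) :
    jaulentDelta p ω σ = (MonoidAlgebra.of ℤ_[p] G σ - 1) * jaulentDeltaCofactor p ω σ := by
  rw [jaulentDelta, jaulentDeltaCofactor, mul_smul_comm,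
    ← sum_smul_pow_eq_sub_one_mul _ _ _ (sum_units_val_map_inv_eq_zero ω hω)]
  simp_rw [map_pow]

theorem isUnit_lift_one_jaulentDeltaCofactor
    (hω : ∀ a : (ZMod p)ˣ, PadicInt.toZMod ((ω a : ℤ_[p]ˣ) : ℤ_[p]) = (a : ZMod p)) (σ : G) :
    IsUnit (MonoidAlgebra.lift ℤ_[p] ℤ_[p] G 1 (jaulentDeltaCofactor p ω σ)) := by
  have hterm : ∀ τ : (ZMod p)ˣ,
      PadicInt.toZMod ((ω τ⁻¹ : ℤ_[p]) * ((τ : ZMod p).val : ℤ_[p])) = 1 := fun τ => by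
    rw [map_mul, hω, map_natCast, ZMod.natCast_zmod_val, ← Units.val_mul, inv_mul_cancel,
      Units.val_one]
  have hpred : ((p - 1 : ℕ) : ZMod p) = -1 := by
    rw [Nat.cast_sub hp.out.one_le, ZMod.natCast_self, Nat.cast_one, zero_sub]
  simp only [jaulentDeltaCofactor, map_smul, map_sum, map_pow, MonoidAlgebra.lift_of,
    MonoidHom.one_apply, one_pow, sum_const, card_range, nsmul_eq_mul, mul_one, smul_eq_mul]
  refine (IsUnit.ringInverse ?_).mul ?_ <;> rw [PadicInt.isUnit_iff_toZMod_ne_zero]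
  · simp
  · rw [map_sum, sum_congr rfl fun τ _ => hterm τ, sum_const, card_univ,
      ZMod.card_units, nsmul_eq_mul, mul_one, hpred]
    exact neg_ne_zero.mpr one_ne_zero

theorem span_jaulentDelta_eq_ker_lift_one {H : Type} [CommGroup H] [Finite H] (hodd : Odd p)
    (hω : ∀ a : (ZMod p)ˣ, PadicInt.toZMod ((ω a : ℤ_[p]ˣ) : ℤ_[p]) = (a : ZMod p))
    {s : H} (hs : s ^ p = 1) (hgen : ∀ g, g ∈ Submonoid.powers s) :
    Ideal.span {jaulentDelta p ω s}
      = RingHom.ker (MonoidAlgebra.lift ℤ_[p] ℤ_[p] H 1).toRingHom := by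
  have hpJ : (p : ℤ_[p]) ∈ Ideal.jacobson (⊥ : Ideal ℤ_[p]) := by
    rw [IsLocalRing.jacobson_eq_maximalIdeal ⊥ bot_ne_top]
    exact PadicInt.p_nonunit
  have hker := MonoidAlgebra.ker_lift_one_le_jacobson_bot hp.out hpJ hs hgen
  have hunit : IsUnit (jaulentDeltaCofactor p ω s) :=
    isUnit_of_isUnit_of_ker_le_jacobson_bot _ hker (isUnit_lift_one_jaulentDeltaCofactor hω s)
  rw [jaulentDelta_eq_sub_one_mul_cofactor (ne_one_of_forall_toZMod_eq hodd hω),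
    Ideal.span_singleton_mul_right_unit hunit, MonoidAlgebra.ker_lift_one_eq_span_of_sub_one hgen]

end Teichmuller

section TwistedConjugation

variable {p : ℕ} [Fact p.Prime] {G : Type} [Group G] {σ : G} {ι : (ZMod p)ˣ →* G}

theorem mul_pow_val_eq_pow_val_mul (hσ : orderOf σ = p)
    (hconj : ∀ τ : (ZMod p)ˣ, ι τ * σ * (ι τ)⁻¹ = σ ^ ((τ : ZMod p).val)) (τ υ : (ZMod p)ˣ) :
    ι τ * σ ^ (υ : ZMod p).val = σ ^ ((τ * υ : (ZMod p)ˣ) : ZMod p).val * ι τ := by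
  rw [← mul_inv_eq_iff_eq_mul, ← conj_pow, hconj, ← pow_mul, Units.val_mul, ZMod.val_mul]
  conv_lhs => rw [← pow_mod_orderOf, hσ]

theorem charIdem_mul_jaulentDelta (hσ : orderOf σ = p)
    (hconj : ∀ τ : (ZMod p)ˣ, ι τ * σ * (ι τ)⁻¹ = σ ^ ((τ : ZMod p).val))
    (ω ψ : (ZMod p)ˣ →* ℤ_[p]ˣ) :
    charIdem p ι (ψ * ω) * jaulentDelta p ω σ = jaulentDelta p ω σ * charIdem p ι ψ := by
  rw [charIdem, charIdem, jaulentDelta, smul_mul_smul_comm, smul_mul_smul_comm,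
    mul_comm (Ring.inverse _), sum_mul_sum, sum_mul_sum]
  conv_rhs => rw [sum_comm]
  congr 1
  refine sum_congr rfl fun τ _ => Fintype.sum_equiv (Equiv.mulLeft τ) _ _ fun υ => ?_
  rw [smul_mul_smul_comm, smul_mul_smul_comm, ← map_mul, ← map_mul, Equiv.coe_mulLeft,
    mul_pow_val_eq_pow_val_mul hσ hconj]
  congr 1
  simp only [MonoidHom.mul_apply, mul_inv_rev, map_mul, Units.val_mul]
  ring

end TwistedConjugation

theorem jaulentDelta_generates_and_shifts_general (p : ℕ) [hp : Fact p.Prime] (hodd : Odd p)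
    (ω : (ZMod p)ˣ →* ℤ_[p]ˣ)
    (hω : ∀ a : (ZMod p)ˣ, PadicInt.toZMod ((ω a : ℤ_[p]ˣ) : ℤ_[p]) = (a : ZMod p))
    (G : Type) [Group G] (σ : G) (hord : orderOf σ = p)
    (ι : (ZMod p)ˣ →* G)
    (hconj : ∀ τ : (ZMod p)ˣ, ι τ * σ * (ι τ)⁻¹ = σ ^ ((τ : ZMod p).val)) :
    (Ideal.span {jaulentDelta p ω (⟨σ, Subgroup.mem_zpowers σ⟩ : Subgroup.zpowers σ)}
        = RingHom.ker ((MonoidAlgebra.lift ℤ_[p] ℤ_[p] (Subgroup.zpowers σ)) 1).toRingHom)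
      ∧ ∀ ψ : (ZMod p)ˣ →* ℤ_[p]ˣ,
          charIdem p ι (ψ * ω) * jaulentDelta p ω σ
            = jaulentDelta p ω σ * charIdem p ι ψ := by
  have hfin : IsOfFinOrder σ := orderOf_pos_iff.mp (hord ▸ hp.out.pos)
  have : Finite (Subgroup.zpowers σ) := hfin.finite_zpowers
  have hgen : ∀ g : Subgroup.zpowers σ, g ∈ Submonoid.powers ⟨σ, Subgroup.mem_zpowers σ⟩ := by
    rintro ⟨g, hg⟩
    obtain ⟨k, rfl⟩ := hfin.mem_powers_iff_mem_zpowers.mpr hg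
    exact ⟨k, rfl⟩
  have hpow : (⟨σ, Subgroup.mem_zpowers σ⟩ : Subgroup.zpowers σ) ^ p = 1 :=
    Subtype.ext (hord ▸ pow_orderOf_eq_one σ)
  open scoped IsMulCommutative in
  exact ⟨span_jaulentDelta_eq_ker_lift_one hodd hω hpow hgen,
    charIdem_mul_jaulentDelta hord hconj ω⟩

/-- Let `p` be an odd prime, `T = (Z/pZ)ˣ`, `ω` the Teichmüller character,
`σ` of order `p` on which `T` acts by conjugation via `τστ⁻¹ = σ^τ`.
Then `Δ` generates the augmentation ideal of `ℤ_p[S]` (`S = ⟨σ⟩` cyclic of order `p`),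
and for every character `ψ : T → ℤ_p^×` one has `e_{ψ·ω}·Δ = Δ·e_ψ`. -/
theorem jaulentDelta_generates_and_shifts (p : ℕ) [hp : Fact p.Prime] (hodd : Odd p)
    (ω : (ZMod p)ˣ →* ℤ_[p]ˣ)
    (hω : ∀ a : (ZMod p)ˣ, PadicInt.toZMod ((ω a : ℤ_[p]ˣ) : ℤ_[p]) = (a : ZMod p))
    (G : Type) [Group G] (σ : G) (hord : orderOf σ = p)
    (ι : (ZMod p)ˣ →* G) (hι : Function.Injective ι)
    (hconj : ∀ τ : (ZMod p)ˣ, ι τ * σ * (ι τ)⁻¹ = σ ^ ((τ : ZMod p).val)) :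
    (Ideal.span {jaulentDelta p ω (⟨σ, Subgroup.mem_zpowers σ⟩ : Subgroup.zpowers σ)}
        = RingHom.ker ((MonoidAlgebra.lift ℤ_[p] ℤ_[p] (Subgroup.zpowers σ)) 1).toRingHom)
      ∧ ∀ ψ : (ZMod p)ˣ →* ℤ_[p]ˣ,
          charIdem p ι (ψ * ω) * jaulentDelta p ω σ
            = jaulentDelta p ω σ * charIdem p ι ψ :=
  jaulentDelta_generates_and_shifts_general p (hp := hp) hodd ω hω G σ hord ι hconj
end

section
/- Let N and p be primes with p | N-1, a an integer with 1 ≤ a ≤ p-1, and X any set of integer representatives of (Z/NZ)^× all congruent to 1 mod p. Then Γ_N(1 - a/p) ≡ ± (a/p)^{a(N-1)/p} · ∏_{x∈X} x^{⌊ax/(Np)⌋ + ⌊a(N-x)/(Np)⌋ + 1} (mod N), where Γ_N is Morita's N-adic Gamma function and a/p is computed in Z_N. -/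
/-!
Approximate `1 - q` by natural numbers `n` (they are dense in `ℤ_N`): by continuity
`Γ_N(1 - q) ≡ Γ_N(n) (mod N)`, and `n ≡ 1 - q ≡ M + 1 (mod N)` with `M = a(N-1)/p`, so Wilson's
theorem over the complete periods of `[0, n)` gives `Γ_N(n) ≡ ±M!`.

On the other side, for `x ∈ X` write `ax mod Np = a + pj` with `0 ≤ j < N`. Then
`j ≡ M(1 - x) (mod N)`, and the exponent of `x` is `1` if `j < M` and `0` otherwise. As `x` runs
over the units mod `N`, `j` runs over `ℤ/N` minus `M`, so the product is `∏_{j<M} (1 - j/M)`; since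
`a/p ≡ -M`, multiplying by `(a/p)^M` gives `∏_{j<M} (j - M) = ±M!`.
-/

open Finset
open scoped Nat

theorem Nat.Prime.filter_range_gcd_eq_one {N t : ℕ} (hN : N.Prime) (ht : t ≤ N) :
    (range t).filter (fun i => i.gcd N = 1) = Ico 1 t := by
  ext i
  have : i.gcd N = 1 ↔ ¬ N ∣ i := Nat.coprime_comm.trans hN.coprime_iff_not_dvd
  simp only [mem_filter, mem_range, mem_Ico, this]
  constructor
  · rintro ⟨hit, hi⟩
    exact ⟨Nat.pos_of_ne_zero (by rintro rfl; exact hi (dvd_zero N)), hit⟩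
  · rintro ⟨hi, hit⟩
    exact ⟨hit, Nat.not_dvd_of_pos_of_lt hi (hit.trans_le ht)⟩

namespace ZMod

variable {N : ℕ} [hN : Fact N.Prime]

theorem prod_range_coprime_add_self (n : ℕ) :
    ∏ i ∈ (range (N + n)).filter (fun i => i.gcd N = 1), (i : ZMod N)
      = -∏ i ∈ (range n).filter (fun i => i.gcd N = 1), (i : ZMod N) := by
  rw [prod_filter, prod_range_add, ← prod_filter, hN.out.filter_range_gcd_eq_one le_rfl,
    prod_Ico_one_prime, prod_filter, neg_one_mul]
  simp

theorem prod_range_coprime_mul_add (c t : ℕ) :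
    ∏ i ∈ (range (N * c + t)).filter (fun i => i.gcd N = 1), (i : ZMod N)
      = (-1) ^ c * ∏ i ∈ (range t).filter (fun i => i.gcd N = 1), (i : ZMod N) := by
  induction c with
  | zero => simp
  | succ c ih =>
    rw [mul_add_one, add_comm (N * c), add_assoc, prod_range_coprime_add_self, ih, pow_succ]
    ring

theorem prod_range_succ_coprime {r : ℕ} (hr : r < N) :
    ∏ i ∈ (range (r + 1)).filter (fun i => i.gcd N = 1), (i : ZMod N) = r ! := by
  rw [hN.out.filter_range_gcd_eq_one hr, ← Nat.cast_prod, prod_Ico_id_eq_factorial]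

end ZMod

namespace PadicInt

variable {N : ℕ} [Fact N.Prime]

theorem toZMod_eq_of_norm_sub_lt_one {x y : ℤ_[N]} (h : ‖x - y‖ < 1) : toZMod x = toZMod y := by
  rw [← sub_eq_zero, ← map_sub, ← RingHom.mem_ker, ker_toZMod, IsLocalRing.mem_maximalIdeal,
    mem_nonunits]
  exact h

theorem exists_natCast_toZMod_eq {f : ℤ_[N] → ℤ_[N]} (hf : Continuous f) (z : ℤ_[N]) :
    ∃ n : ℕ, toZMod (n : ℤ_[N]) = toZMod z ∧ toZMod (f n) = toZMod (f z) := by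
  obtain ⟨δ, hδ, hfδ⟩ := Metric.continuous_iff.mp hf z 1 one_pos
  obtain ⟨n, hn⟩ := denseRange_natCast.exists_dist_lt z (lt_min hδ one_pos)
  rw [dist_comm] at hn
  refine ⟨n, toZMod_eq_of_norm_sub_lt_one ?_, toZMod_eq_of_norm_sub_lt_one ?_⟩
  · rw [← dist_eq_norm]; exact hn.trans_le (min_le_right _ _)
  · rw [← dist_eq_norm]; exact hfδ n (hn.trans_le (min_le_left _ _))

theorem toZMod_eq_neg_of_mul_eq {p a M : ℕ} {q : ℤ_[N]} (hp : (p : ZMod N) ≠ 0)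
    (hq : (p : ℤ_[N]) * q = a) (hpM : p * M + a = a * N) : toZMod q = -M := by
  have hpq := congrArg toZMod hq
  have hpM' := congrArg (Nat.cast : ℕ → ZMod N) hpM
  simp only [map_mul, map_natCast] at hpq
  push_cast [ZMod.natCast_self] at hpM'
  exact mul_left_cancel₀ hp (by linear_combination hpq + hpM')

theorem exists_toZMod_eq_neg_one_pow_mul_factorial {Γ : ℤ_[N] → ℤ_[N]} (hΓcont : Continuous Γ)
    (hΓval : ∀ n : ℕ, 1 < n →
      Γ (n : ℤ_[N]) = (-1) ^ n *
        ∏ i ∈ (range n).filter (fun i => i.gcd N = 1), (i : ℤ_[N]))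
    {z : ℤ_[N]} {r : ℕ} (hr : 0 < r) (hrN : r + 1 < N) (hz : toZMod z = r + 1) :
    ∃ k : ℕ, toZMod (Γ z) = (-1) ^ k * r ! := by
  obtain ⟨n, hn, hΓn⟩ := exists_natCast_toZMod_eq hΓcont z
  have hnr : n % N = r + 1 := by
    have hn' : ((n : ℕ) : ZMod N) = ((r + 1 : ℕ) : ZMod N) := by
      rw [← map_natCast toZMod, hn, hz, Nat.cast_succ]
    simpa only [ZMod.val_natCast, ZMod.val_natCast_of_lt hrN] using congrArg ZMod.val hn'
  obtain ⟨c, hc⟩ : ∃ c, n = N * c + (r + 1) := ⟨n / N, by rw [← hnr, Nat.div_add_mod]⟩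
  have hprod := ZMod.prod_range_coprime_mul_add (N := N) c (r + 1)
  rw [← hc, ZMod.prod_range_succ_coprime (by omega)] at hprod
  refine ⟨n + c, ?_⟩
  rw [← hΓn, hΓval n (by omega), map_mul, map_pow, map_neg, map_one, map_prod]
  simp only [map_natCast]
  rw [hprod, pow_add, mul_assoc]

end PadicInt

theorem Int.ediv_add_ediv_add_one_eq {u v D : ℤ} (hD : 0 < D) (h0 : 0 ≤ u + v) (h1 : u + v < D) :
    u / D + v / D + 1 = if u % D ≤ u + v then 1 else 0 := by
  have hu := Int.mul_ediv_add_emod u D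
  have hv := Int.mul_ediv_add_emod v D
  have hu0 := Int.emod_nonneg u hD.ne'
  have hv0 := Int.emod_nonneg v hD.ne'
  have huD := Int.emod_lt_of_pos u hD
  have hvD := Int.emod_lt_of_pos v hD
  have ht : D * (u / D + v / D) = u + v - u % D - v % D := by linarith
  have hlt : u / D + v / D < 1 := lt_of_mul_lt_mul_left (by linarith) hD.le
  have hgt : -2 < u / D + v / D := lt_of_mul_lt_mul_left (by linarith) hD.le
  obtain h | h : u / D + v / D = 0 ∨ u / D + v / D = -1 := by omega
  all_goals rw [h] at ht; split_ifs <;> linarith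

theorem exists_emod_mul_eq_add_mul {N p a : ℕ} (hN : 0 < N) (hap : a < p) {x : ℤ}
    (hx1 : x ≡ 1 [ZMOD p]) : ∃ j : ℕ, j < N ∧ a * x % (N * p) = a + p * j := by
  have hp0 : (0 : ℤ) < p := by exact_mod_cast (by omega : 0 < p)
  have hNp : (0 : ℤ) < N * p := by positivity
  have hr0 := Int.emod_nonneg (a * x) hNp.ne'
  have hrNp := Int.emod_lt_of_pos (a * x) hNp
  obtain ⟨j, hj⟩ : (p : ℤ) ∣ a * x % (N * p) - a :=
    ((Int.mod_modEq _ _).of_mul_left N |>.trans (by simpa using hx1.mul_left (a : ℤ))).symm.dvd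
  have hj0 : 0 ≤ j := by
    have : (p : ℤ) * (-1) < p * j := by linarith [(by exact_mod_cast hap : (a : ℤ) < p)]
    have := lt_of_mul_lt_mul_left this hp0.le
    omega
  lift j to ℕ using hj0
  refine ⟨j, ?_, by linarith⟩
  have : (p : ℤ) * j < p * N := by linarith
  exact_mod_cast lt_of_mul_lt_mul_left this hp0.le

theorem emod_le_iff_val_mul_one_sub_lt {N p a M : ℕ} [Fact N.Prime] (hap : a < p)
    (hp : (p : ZMod N) ≠ 0) (hM : (M : ZMod N) ≠ 0) (hpM : p * M + a = a * N)
    {x : ℤ} (hx1 : x ≡ 1 [ZMOD p]) (hx0 : (x : ZMod N) ≠ 0) :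
    a * x % (N * p) ≤ a * N ↔ ((M * (1 - x) : ZMod N)).val < M := by
  obtain ⟨j, hjN, hj⟩ := exists_emod_mul_eq_add_mul (Fact.out : N.Prime).pos hap hx1
  have hjx : (j : ZMod N) = M * (1 - x) := by
    have hrx : ((a * x % (N * p) : ℤ) : ZMod N) = a * x := by
      simpa using (ZMod.intCast_eq_intCast_iff _ _ _).mpr
        ((Int.mod_modEq ((a : ℤ) * x) (N * p)).of_mul_right p)
    have hpj : (p : ZMod N) * j = a * x - a := by
      rw [← hrx, hj]; push_cast; ring
    have hpM' : (p : ZMod N) * M = -a := by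
      have := congrArg (Nat.cast : ℕ → ZMod N) hpM
      push_cast [ZMod.natCast_self] at this
      linear_combination this
    apply mul_left_cancel₀ hp
    linear_combination hpj - (1 - (x : ZMod N)) * hpM'
  have hjM : j ≠ M := by
    rintro rfl
    apply hx0
    apply mul_left_cancel₀ hM
    linear_combination hjx
  rw [← hjx, ZMod.val_natCast_of_lt hjN, hj]
  have hpM' : (p : ℤ) * M + a = a * N := by exact_mod_cast hpM
  have hp0 : (0 : ℤ) < p := by exact_mod_cast (by omega : 0 < p)
  constructor
  · intro h
    have := le_of_mul_le_mul_left (by linarith : (p : ℤ) * j ≤ p * M) hp0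
    omega
  · intro h
    have : (p : ℤ) * j ≤ p * M := by gcongr
    linarith

theorem floor_add_floor_add_one_eq_ite {N p a M : ℕ} [Fact N.Prime] (hap : a < p)
    (hp : (p : ZMod N) ≠ 0) (hM : (M : ZMod N) ≠ 0) (hpM : p * M + a = a * N)
    {x : ℤ} (hx1 : x ≡ 1 [ZMOD p]) (hx0 : (x : ZMod N) ≠ 0) :
    ⌊((a : ℚ) * (x : ℚ)) / ((N : ℚ) * p)⌋ + ⌊((a : ℚ) * ((N : ℚ) - (x : ℚ))) / ((N : ℚ) * p)⌋ + 1
      = if ((M * (1 - x) : ZMod N)).val < M then 1 else 0 := by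
  have hfloor (u : ℤ) : ⌊(u : ℚ) / ((N : ℚ) * p)⌋ = u / (N * p) := by
    exact_mod_cast Rat.floor_intCast_div_natCast u (N * p)
  have hN0 : (0 : ℤ) < N := by exact_mod_cast (Fact.out : N.Prime).pos
  have hNp : (0 : ℤ) < N * p := mul_pos hN0 (by exact_mod_cast (by omega : 0 < p))
  have haN : (a : ℤ) * x + a * (N - x) = a * N := by ring
  have haNp : (a : ℤ) * N < N * p := by
    rw [mul_comm]; exact mul_lt_mul_of_pos_left (by exact_mod_cast hap) hN0
  have key := Int.ediv_add_ediv_add_one_eq hNp (haN ▸ by positivity) (haN ▸ haNp)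
  simp only [haN, emod_le_iff_val_mul_one_sub_lt hap hp hM hpM hx1 hx0] at key
  rw [← key, ← hfloor, ← hfloor]
  push_cast
  rfl

theorem prod_intCast_eq_prod_ne_zero {N : ℕ} [Fact N.Prime] {X : Finset ℤ}
    (hXrep : ∀ u : (ZMod N)ˣ, ∃! x, x ∈ X ∧ (x : ZMod N) = u)
    (hXunit : ∀ x ∈ X, (x : ZMod N) ≠ 0) {α : Type*} [CommMonoid α] (f : ZMod N → α) :
    ∏ x ∈ X, f x = ∏ z ∈ univ.filter (· ≠ 0), f z := by
  refine prod_nbij (fun x => (x : ZMod N)) (fun x hx => by simpa using hXunit x hx) ?_ ?_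
    (fun _ _ => rfl)
  · intro x₁ hx₁ x₂ hx₂ h
    exact (hXrep (Units.mk0 _ (hXunit x₁ hx₁))).unique ⟨hx₁, rfl⟩ ⟨hx₂, h.symm⟩
  · intro z hz
    obtain ⟨x, ⟨hx, hxz⟩, -⟩ := hXrep (Units.mk0 z (by simpa using hz))
    exact ⟨x, hx, hxz⟩

theorem prod_ite_val_mul_one_sub_lt {N M : ℕ} [Fact N.Prime] (hMN : M < N)
    (hM : (M : ZMod N) ≠ 0) :
    ∏ z ∈ univ.filter (· ≠ (0 : ZMod N)), (if (M * (1 - z)).val < M then z else 1)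
      = ∏ j ∈ range M, (1 - j / M : ZMod N) := by
  have hval {j : ℕ} (hj : j < M) : (M * (1 - (1 - j / M)) : ZMod N).val = j := by
    rw [sub_sub_cancel, mul_div_cancel₀ _ hM, ZMod.val_natCast_of_lt (hj.trans hMN)]
  rw [← prod_filter, filter_filter]
  refine prod_nbij' (fun z => (M * (1 - z)).val) (fun j => 1 - j / M) ?_ ?_ ?_ ?_ ?_
  · intro z hz
    simpa using (mem_filter.mp hz).2.2
  · intro j hj
    have hj := mem_range.mp hj
    refine mem_filter.mpr ⟨mem_univ _, ?_, by rw [hval hj]; exact hj⟩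
    intro h0
    have := hval hj
    rw [h0, sub_zero, mul_one, ZMod.val_natCast_of_lt hMN] at this
    omega
  · intro z _
    simp only [ZMod.natCast_val, ZMod.cast_id', id, mul_div_cancel_left₀ _ hM, sub_sub_cancel]
  · intro j hj
    exact hval (mem_range.mp hj)
  · intro z _
    simp only [ZMod.natCast_val, ZMod.cast_id', id, mul_div_cancel_left₀ _ hM, sub_sub_cancel]

theorem prod_range_natCast_sub_self (R : Type*) [CommRing R] (M : ℕ) :
    ∏ j ∈ range M, ((j : R) - M) = (-1) ^ M * M ! := by
  have hcard : (-1 : R) ^ M = (-1) ^ #(range M) := by rw [card_range]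
  rw [← Nat.descFactorial_self, Nat.descFactorial_eq_prod_range, Nat.cast_prod, hcard, ← prod_neg]
  refine prod_congr rfl fun j hj => ?_
  rw [Nat.cast_sub (mem_range.mp hj).le, neg_sub]

theorem neg_pow_mul_prod_range_one_sub_div {K : Type*} [Field K] {M : ℕ} (hM : (M : K) ≠ 0) :
    (-(M : K)) ^ M * ∏ j ∈ range M, (1 - (j : K) / M) = (-1) ^ M * M ! := by
  have hpow : (-(M : K)) ^ M = ∏ _j ∈ range M, -(M : K) := by rw [prod_const, card_range]
  rw [hpow, ← prod_mul_distrib, ← prod_range_natCast_sub_self]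
  refine prod_congr rfl fun j _ => ?_
  field_simp
  ring

theorem moritaGamma_value_formula_general (N p : ℕ) [hNp : Fact N.Prime]
    (hdvd : p ∣ N - 1) (a : ℕ) (ha1 : 1 ≤ a) (hap : a ≤ p - 1)
    (Γ : ℤ_[N] → ℤ_[N]) (hΓcont : Continuous Γ)
    (hΓval : ∀ n : ℕ, 1 < n →
      Γ (n : ℤ_[N]) = (-1) ^ n *
        ∏ i ∈ (Finset.range n).filter (fun i => Nat.gcd i N = 1), (i : ℤ_[N]))
    (X : Finset ℤ)
    (hXrep : ∀ u : (ZMod N)ˣ, ∃! x, x ∈ X ∧ ((x : ZMod N) = (u : ZMod N)))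
    (hXunit : ∀ x ∈ X, ((x : ZMod N)) ≠ 0)
    (hXp : ∀ x ∈ X, x ≡ 1 [ZMOD p])
    (q : ℤ_[N]) (hq : (p : ℤ_[N]) * q = (a : ℤ_[N])) :
    ∃ ε : ZMod N, (ε = 1 ∨ ε = -1) ∧
      PadicInt.toZMod (Γ (1 - q))
        = ε * (PadicInt.toZMod q) ^ (a * (N - 1) / p) *
            ∏ x ∈ X, ((x : ZMod N)) ^
              (⌊((a : ℚ) * (x : ℚ)) / ((N : ℚ) * p)⌋
                + ⌊((a : ℚ) * ((N : ℚ) - (x : ℚ))) / ((N : ℚ) * p)⌋ + 1) := by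
  set M := a * (N - 1) / p
  have hN := hNp.out.two_le
  have hlt : a < p := by omega
  have hpN : p < N := by have := Nat.le_of_dvd (by omega) hdvd; omega
  have hpM : p * M + a = a * N := by
    rw [Nat.mul_div_cancel' (hdvd.mul_left a), ← mul_add_one, Nat.sub_add_cancel (by omega)]
  have hM0 : 0 < M := by nlinarith
  have hMN : M + 1 < N := by nlinarith
  have hcast_ne_zero {n : ℕ} (h0 : 0 < n) (hn : n < N) : (n : ZMod N) ≠ 0 := by
    rw [Ne, ZMod.natCast_eq_zero_iff]
    exact Nat.not_dvd_of_pos_of_lt h0 hn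
  have hp := hcast_ne_zero (by omega) hpN
  have hM := hcast_ne_zero hM0 (by omega)
  have hs := PadicInt.toZMod_eq_neg_of_mul_eq hp hq hpM
  obtain ⟨k, hk⟩ := PadicInt.exists_toZMod_eq_neg_one_pow_mul_factorial hΓcont hΓval hM0 hMN
    (z := 1 - q) (by rw [map_sub, map_one, hs]; ring)
  have hprod : ∏ x ∈ X, (x : ZMod N) ^
      (⌊((a : ℚ) * (x : ℚ)) / ((N : ℚ) * p)⌋
        + ⌊((a : ℚ) * ((N : ℚ) - (x : ℚ))) / ((N : ℚ) * p)⌋ + 1)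
      = ∏ j ∈ range M, (1 - j / M : ZMod N) := by
    rw [← prod_ite_val_mul_one_sub_lt (by omega) hM, ← prod_intCast_eq_prod_ne_zero hXrep hXunit]
    refine prod_congr rfl fun x hx => ?_
    rw [floor_add_floor_add_one_eq_ite hlt hp hM hpM (hXp x hx) (hXunit x hx)]
    split_ifs <;> simp
  refine ⟨(-1) ^ (k + M), neg_one_pow_eq_or _ _, ?_⟩
  rw [hk, hprod, hs, mul_assoc, neg_pow_mul_prod_range_one_sub_div hM, pow_add, mul_assoc,
    ← mul_assoc ((-1) ^ M), ← pow_add, Even.neg_one_pow ⟨M, rfl⟩, one_mul]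

/-- Let `N, p` be primes with `p ∣ N-1`, `1 ≤ a ≤ p-1`, and `X` a set of integer
representatives of `(Z/NZ)ˣ` all congruent to `1 (mod p)`. Then, for Morita's `N`-adic
Gamma function `Γ_N`,
`Γ_N(1 - a/p) ≡ ±(a/p)^{a(N-1)/p} ∏_{x∈X} x^{⌊ax/(Np)⌋+⌊a(N-x)/(Np)⌋+1} (mod N)`,
where `q = a/p ∈ ℤ_N`. -/
theorem moritaGamma_value_formula (N p : ℕ) [hNp : Fact N.Prime] (hp : p.Prime)
    (hdvd : p ∣ N - 1) (a : ℕ) (ha1 : 1 ≤ a) (hap : a ≤ p - 1)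
    (Γ : ℤ_[N] → ℤ_[N]) (hΓcont : Continuous Γ)
    (hΓval : ∀ n : ℕ, 1 < n →
      Γ (n : ℤ_[N]) = (-1) ^ n *
        ∏ i ∈ (Finset.range n).filter (fun i => Nat.gcd i N = 1), (i : ℤ_[N]))
    (hΓunit : ∀ z : ℤ_[N], IsUnit (Γ z))
    (X : Finset ℤ)
    (hXrep : ∀ u : (ZMod N)ˣ, ∃! x, x ∈ X ∧ ((x : ZMod N) = (u : ZMod N)))
    (hXunit : ∀ x ∈ X, ((x : ZMod N)) ≠ 0)
    (hXp : ∀ x ∈ X, x ≡ 1 [ZMOD p])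
    (q : ℤ_[N]) (hq : (p : ℤ_[N]) * q = (a : ℤ_[N])) :
    ∃ ε : ZMod N, (ε = 1 ∨ ε = -1) ∧
      PadicInt.toZMod (Γ (1 - q))
        = ε * (PadicInt.toZMod q) ^ (a * (N - 1) / p) *
            ∏ x ∈ X, ((x : ZMod N)) ^
              (⌊((a : ℚ) * (x : ℚ)) / ((N : ℚ) * p)⌋
                + ⌊((a : ℚ) * ((N : ℚ) - (x : ℚ))) / ((N : ℚ) * p)⌋ + 1) :=
  moritaGamma_value_formula_general N p (hNp := hNp) hdvd a ha1 hap Γ hΓcont hΓval X hXrep hXunit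
    hXp q hq
end

section
/- Let N, p be primes ≥ 5 with p | N-1, ν = v_p(N-1), and a an integer with 1 ≤ a ≤ p-1. Set X = {N - kp : k = 1, ..., N-1}. Then ∑_{x∈X} ⌊ax/(Np)⌋ ≡ a·(N-1)/p (mod p^ν). -/
/-! Write `a k = q_k N + j_k` with `0 ≤ j_k < N`. The `k`-th summand is `⌊a/p - j_k/N⌋ - q_k`,
and `⌊a/p - j_k/N⌋` is `0` or `-1` according as `j_k ≤ d := a(N-1)/p` or not.
As `k ↦ a k mod N` permutes the residues, these parts add up to `d + 1 - N`,
while `2 ∑ q_k = (a-1)(N-1)`.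
Hence the sum is `d - (N - 1) - ∑ q_k`, and the odd number `p^ν` divides both `N - 1`
and `∑ q_k`. -/

open Finset

theorem Nat.Coprime.sum_range_mul_mod {M : Type*} [AddCommMonoid M] {a n : ℕ}
    (h : a.Coprime n) (f : ℕ → M) :
    ∑ k ∈ range n, f (a * k % n) = ∑ k ∈ range n, f k := by
  have hmaps : Set.MapsTo (fun k => a * k % n) (range n) (range n) := fun k hk =>
    mem_range.2 (Nat.mod_lt _ ((Nat.zero_le k).trans_lt (mem_range.1 hk)))
  have hinj : Set.InjOn (fun k => a * k % n) (range n) := fun k hk l hl hkl =>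
    (Nat.ModEq.cancel_left_of_coprime h.symm hkl).eq_of_lt_of_lt (mem_range.1 hk)
      (mem_range.1 hl)
  have hbij := ((range n).finite_toSet.injOn_iff_bijOn_of_mapsTo hmaps).1 hinj
  exact sum_nbij _ hmaps hinj hbij.surjOn fun _ _ => rfl

theorem Nat.Coprime.two_mul_sum_range_mul_div {a n : ℕ} (h : a.Coprime n) :
    2 * ∑ k ∈ range n, a * k / n = (a - 1) * (n - 1) := by
  rcases n.eq_zero_or_pos with rfl | hn
  · simp
  have hdivmod :
      n * ∑ k ∈ range n, a * k / n + ∑ k ∈ range n, k = a * ∑ k ∈ range n, k :=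
    calc n * ∑ k ∈ range n, a * k / n + ∑ k ∈ range n, k
        = ∑ k ∈ range n, (n * (a * k / n) + a * k % n) := by
          rw [← h.sum_range_mul_mod (fun k => k), mul_sum, sum_add_distrib]
      _ = a * ∑ k ∈ range n, k := by simp only [Nat.div_add_mod, mul_sum]
  have hquot : n * ∑ k ∈ range n, a * k / n = (a - 1) * ∑ k ∈ range n, k := by
    rw [Nat.sub_one_mul]; omega
  apply Nat.eq_of_mul_eq_mul_left hn
  calc n * (2 * ∑ k ∈ range n, a * k / n) = (a - 1) * ((∑ k ∈ range n, k) * 2) := by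
        rw [mul_left_comm, hquot]; ring
    _ = n * ((a - 1) * (n - 1)) := by rw [sum_range_id_mul_two]; ring

theorem Int.floor_eq_ite_of_mem_Ico {R : Type*} [Ring R] [LinearOrder R] [IsStrictOrderedRing R]
    [FloorRing R] {z : R} (h₁ : -1 ≤ z) (h₂ : z < 1) :
    ⌊z⌋ = if 0 ≤ z then 0 else -1 := by
  split_ifs with hz
  · exact Int.floor_eq_zero_iff.2 ⟨hz, h₂⟩
  · rw [Int.floor_eq_iff]
    push_cast
    exact ⟨h₁, by simpa using not_le.1 hz⟩

section FloorRing

variable {α : Type*} [Field α] [LinearOrder α] [IsStrictOrderedRing α] [FloorRing α]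

theorem Int.floor_sub_natCast_div (x : α) (m n : ℕ) :
    ⌊x - m / n⌋ = ⌊x - ((m % n : ℕ) : α) / n⌋ - (m / n : ℕ) := by
  rcases eq_or_ne n 0 with rfl | hn
  · simp
  rw [← Int.floor_sub_natCast]
  congr 1
  conv_lhs => rw [← Nat.div_add_mod m n]
  push_cast
  field_simp
  ring

theorem floor_div_sub_div_eq_ite {a p d j N : ℕ} (hap : a < p) (hj : j < N)
    (hd : p * d + a = a * N) :
    ⌊(a : α) / p - (j : α) / N⌋ = if j ≤ d then 0 else -1 := by
  have hp : (0 : α) < p := by exact_mod_cast (Nat.zero_le a).trans_lt hap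
  have hN : (0 : α) < N := by exact_mod_cast (Nat.zero_le j).trans_lt hj
  have hthreshold : j * p ≤ a * N ↔ j ≤ d := by
    rw [← hd, ← Nat.le_div_iff_mul_le ((Nat.zero_le a).trans_lt hap), Nat.mul_add_div
      ((Nat.zero_le a).trans_lt hap), Nat.div_eq_of_lt hap, add_zero]
  rw [Int.floor_eq_ite_of_mem_Ico]
  · simp only [sub_nonneg, div_le_div_iff₀ hN hp]
    exact_mod_cast if_congr hthreshold rfl rfl
  · have : (j : α) / N < 1 := (div_lt_one hN).2 (by exact_mod_cast hj)
    have : 0 ≤ (a : α) / p := by positivity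
    linarith
  · have : (a : α) / p < 1 := (div_lt_one hp).2 (by exact_mod_cast hap)
    have : 0 ≤ (j : α) / N := by positivity
    linarith

theorem sum_range_floor_div_sub_div {a p d N : ℕ} (hN : 0 < N) (hap : a < p)
    (hd : p * d + a = a * N) :
    ∑ j ∈ range N, ⌊(a : α) / p - (j : α) / N⌋ = d + 1 - N := by
  have hdN : d + 1 ≤ N := by
    by_contra! h
    nlinarith
  obtain ⟨r, rfl⟩ := Nat.exists_eq_add_of_le hdN
  rw [sum_congr rfl fun j hj => floor_div_sub_div_eq_ite hap (mem_range.1 hj) hd, sum_range_add]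
  have hlow : ∀ j ∈ range (d + 1), j ≤ d := fun j hj => Nat.lt_succ_iff.1 (mem_range.1 hj)
  have hhigh : ∀ i ∈ range r, ¬ d + 1 + i ≤ d := fun i _ => by omega
  rw [sum_ite_of_true hlow, sum_ite_of_false hhigh]
  simp

theorem floor_mul_sub_mul_div_eq {a N p : ℕ} (hN : N ≠ 0) (hp : p ≠ 0) (k : ℕ) :
    ⌊((a : α) * ((N : α) - (k : α) * p)) / ((N : α) * p)⌋
      = ⌊(a : α) / p - ((a * k % N : ℕ) : α) / N⌋ - (a * k / N : ℕ) := by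
  have hN0 : (N : α) ≠ 0 := by exact_mod_cast hN
  have hp0 : (p : α) ≠ 0 := by exact_mod_cast hp
  rw [← Int.floor_sub_natCast_div]
  congr 1
  field_simp
  push_cast
  ring

theorem sum_Icc_floor_mul_sub_mul_div {a N p d : ℕ} (hcop : a.Coprime N) (hN : 0 < N)
    (hap : a < p) (hd : p * d + a = a * N) :
    ∑ k ∈ Icc 1 (N - 1), ⌊((a : α) * ((N : α) - (k : α) * p)) / ((N : α) * p)⌋
      = d + 1 - N - ∑ k ∈ range N, ((a * k / N : ℕ) : ℤ) := by
  have hterm :=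
    floor_mul_sub_mul_div_eq (α := α) (a := a) hN.ne' ((Nat.zero_le a).trans_lt hap).ne'
  have hIcc : Icc 1 (N - 1) ⊆ range N := fun k hk => by
    simp only [mem_Icc, mem_range] at hk ⊢
    omega
  rw [sum_subset hIcc fun k hk hk' => ?zero]
  case zero =>
    obtain rfl : k = 0 := by simp only [mem_Icc, mem_range] at hk hk'; omega
    rw [hterm, mul_zero, Nat.zero_mod, Nat.zero_div, floor_div_sub_div_eq_ite hap hN hd]
    simp
  rw [sum_congr rfl fun k _ => hterm k, sum_sub_distrib,
    hcop.sum_range_mul_mod (fun j => ⌊(a : α) / p - (j : α) / N⌋),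
    sum_range_floor_div_sub_div hN hap hd]

end FloorRing

theorem sum_floor_over_X_general (N p ν a : ℕ) (hN : N.Prime) (hp : p.Prime)
    (hp5 : 5 ≤ p) (hdvd : p ∣ N - 1)
    (hν : ν = (N - 1).factorization p) (ha1 : 1 ≤ a) (hap : a ≤ p - 1) :
    (∑ k ∈ Finset.Icc 1 (N - 1),
        ⌊((a : ℚ) * ((N : ℚ) - (k : ℚ) * p)) / ((N : ℚ) * p)⌋)
      ≡ ((a * (N - 1) / p : ℕ) : ℤ) [ZMOD ((p : ℤ) ^ ν)] := by
  have ha_lt : a < p := by omega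
  have hpN : p ≤ N - 1 := Nat.le_of_dvd (by have := hN.two_le; omega) hdvd
  have hcop : a.Coprime N :=
    Nat.coprime_comm.1 <| hN.coprime_iff_not_dvd.2 fun h => by
      have := Nat.le_of_dvd (by omega) h
      omega
  obtain ⟨d, hd⟩ : p ∣ a * (N - 1) := hdvd.mul_left a
  have hthreshold : p * d + a = a * N := by
    rw [← hd, ← Nat.mul_add_one, Nat.sub_add_cancel hN.one_le]
  have hpν : p ^ ν ∣ N - 1 := hν ▸ Nat.ordProj_dvd (N - 1) p
  have hquot : p ^ ν ∣ ∑ k ∈ range N, a * k / N := by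
    have hodd : (p ^ ν).Coprime 2 :=
      Nat.Coprime.pow_left _ ((Nat.coprime_primes hp Nat.prime_two).2 (by omega))
    exact hodd.dvd_of_dvd_mul_left (hcop.two_mul_sum_range_mul_div ▸ hpν.mul_left _)
  rw [sum_Icc_floor_mul_sub_mul_div hcop hN.pos ha_lt hthreshold, hd,
    Nat.mul_div_cancel_left d hp.pos]
  have hdiff := Int.natCast_dvd_natCast.2 (dvd_add hpν hquot)
  rw [Nat.cast_pow, Nat.cast_add, Nat.cast_sub hN.one_le, Nat.cast_one, Nat.cast_sum] at hdiff
  exact Int.modEq_iff_dvd.2 (by convert hdiff using 1; ring)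

/-- Let `N, p` be primes `≥ 5` with `p ∣ N-1`, `ν = v_p(N-1)`, and `1 ≤ a ≤ p-1`.
For `X = {N - kp : k = 1, ..., N-1}` one has
`∑_{x∈X} ⌊ax/(Np)⌋ ≡ a·(N-1)/p (mod p^ν)`. -/
theorem sum_floor_over_X (N p ν a : ℕ) (hN : N.Prime) (hp : p.Prime)
    (hN5 : 5 ≤ N) (hp5 : 5 ≤ p) (hdvd : p ∣ N - 1)
    (hν : ν = (N - 1).factorization p) (ha1 : 1 ≤ a) (hap : a ≤ p - 1) :
    (∑ k ∈ Finset.Icc 1 (N - 1),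
        ⌊((a : ℚ) * ((N : ℚ) - (k : ℚ) * p)) / ((N : ℚ) * p)⌋)
      ≡ ((a * (N - 1) / p : ℕ) : ℤ) [ZMOD ((p : ℤ) ^ ν)] :=
  sum_floor_over_X_general N p ν a hN hp hp5 hdvd hν ha1 hap
end
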